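/- In the automaton group of automaton 887, the element bc satisfies bc(1) = 1 and (bc)|_1 = ca; consequently (bc)^n(1^∞) = 1·(ca)^n(1^∞) for all n ≥ 1, and since (ca)^n(1^∞) ≠ 1^∞ for all n ≥ 1, the element bc has infinite order. -/

import Mathlib

namespace Stmt13


/-- A Mealy automaton over the binary alphabet with state set `S`. -/
structure Mealy (S : Type) where
  /-- transition function -/
  δ : S → Bool → S
  /-- output function -/
  τ : S → Bool → Bool

namespace Mealy

variable {S : Type} (M : Mealy S)

/-- The state reached from `q` after reading the first `n` letters of `w`. -/
def stateAt (q : S) (w : ℕ → Bool) : ℕ → S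
  | 0 => q
  | n + 1 => M.δ (stateAt q w n) (w n)

/-- The action of state `q` on infinite words. -/
def act (q : S) (w : ℕ → Bool) : ℕ → Bool :=
  fun n => M.τ (M.stateAt q w n) (w n)

/-- The inverse automaton (for automata whose output functions are involutions). -/
def inv : Mealy S := ⟨fun q b => M.δ q (M.τ q b), M.τ⟩

theorem stateAt_inv_act (h : ∀ q b, M.τ q (M.τ q b) = b) (q : S) (w : ℕ → Bool) :
    ∀ n, M.inv.stateAt q (M.act q w) n = M.stateAt q w n := by
  intro n
  induction n with
  | zero => rfl
  | succ n ih =>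
    show M.inv.δ (M.inv.stateAt q (M.act q w) n) (M.act q w n) = M.δ (M.stateAt q w n) (w n)
    rw [ih]
    show M.δ (M.stateAt q w n) (M.τ (M.stateAt q w n) (M.τ (M.stateAt q w n) (w n))) = _
    rw [h]

theorem inv_act (h : ∀ q b, M.τ q (M.τ q b) = b) (q : S) (w : ℕ → Bool) :
    M.inv.act q (M.act q w) = w := by
  funext n
  show M.inv.τ (M.inv.stateAt q (M.act q w) n) (M.act q w n) = w n
  rw [stateAt_inv_act M h]
  show M.τ (M.stateAt q w n) (M.τ (M.stateAt q w n) (w n)) = w n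
  rw [h]

theorem inv_inv (h : ∀ q b, M.τ q (M.τ q b) = b) : M.inv.inv = M := by
  obtain ⟨d, t⟩ := M
  simp only [inv]
  congr 1
  funext q b
  exact congrArg (d q) (h q b)

/-- The permutation of the set of infinite binary words defined by state `q`. -/
def perm (h : ∀ q b, M.τ q (M.τ q b) = b) (q : S) : Equiv.Perm (ℕ → Bool) where
  toFun := M.act q
  invFun := M.inv.act q
  left_inv := fun w => M.inv_act h q w
  right_inv := fun w => by
    have h2 : ∀ q b, M.inv.τ q (M.inv.τ q b) = b := h
    have := M.inv.inv_act h2 q w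
    rwa [M.inv_inv h] at this

end Mealy

/-- Prepend a finite word to an infinite word. -/
def cat (u : List Bool) (w : ℕ → Bool) : ℕ → Bool :=
  fun n => u.getD n (w (n - u.length))

/-- The (semantic) restriction of a transformation of infinite words to the
subtree indexed by the finite word `u`. -/
def resW (f : (ℕ → Bool) → ℕ → Bool) (u : List Bool) : (ℕ → Bool) → ℕ → Bool :=
  fun w n => f (cat u w) (n + u.length)

/-- The periodic infinite word with period `u`. -/
def per (u : List Bool) : ℕ → Bool := fun n => u.getD (n % u.length) false

/-- Left-shift equivalence of infinite words: they share a common infinite tail. -/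
def seq (u v : ℕ → Bool) : Prop := ∃ k l : ℕ, ∀ n, u (n + k) = v (n + l)

inductive St : Type
  | a | b | c
deriving DecidableEq

instance : Fintype St := ⟨{St.a, St.b, St.c}, fun x => by cases x <;> simp⟩

/-- Automaton 887. -/
def M : Mealy St where
  δ := fun q x => match q, x with
    | .a, false => .b | .a, true => .b
    | .b, false => .c | .b, true => .c
    | .c, false => .b | .c, true => .a
  τ := fun q x => match q with
    | .a => !x
    | .b => x
    | .c => x

theorem M_inv : ∀ q x, M.τ q (M.τ q x) = x := by decide

/-- The automorphism of the binary tree boundary defined by state `a`. -/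
def a : Equiv.Perm (ℕ → Bool) := M.perm M_inv .a

/-- The automorphism of the binary tree boundary defined by state `b`. -/
def b : Equiv.Perm (ℕ → Bool) := M.perm M_inv .b

/-- The automorphism of the binary tree boundary defined by state `c`. -/
def c : Equiv.Perm (ℕ → Bool) := M.perm M_inv .c

/-
With `1w` written for `cat [true] w`, the wreath recursion
`a = σ(b, b)`, `b = (c, c)`, `c = (b, a)` gives `bc(1w) = 1·ca(w)`, `(ca)²(1w) = 1·ab(w)`
and `(ab)²(1w) = 1·(bc)²(w)`. Both `ca` and `ab` flip the first letter, so an odd power of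
either moves `1^∞`. Hence `(ca)ⁿ(1^∞) = 1^∞` forces `n = 4j`, and then
`(ca)^{4j}(1^∞) = 111·(ca)^{2j}(1^∞)`, so `(ca)^{2j}` fixes `1^∞` as well: infinite descent.
-/

lemma cat_singleton_succ (x : Bool) (w : ℕ → Bool) (n : ℕ) : cat [x] w (n + 1) = w n := by
  cases n <;> rfl

lemma cat_singleton_injective (x : Bool) : Function.Injective (cat [x]) := fun _ _ h =>
  funext fun n => by simpa only [cat_singleton_succ] using congrFun h (n + 1)

lemma cat_singleton_const (x : Bool) : cat [x] (fun _ => x) = fun _ => x := by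
  funext n
  cases n <;> rfl

lemma cat_singleton_eq_const_iff (x : Bool) (u : ℕ → Bool) :
    cat [x] u = (fun _ => x) ↔ u = fun _ => x := by
  conv_lhs => rw [← cat_singleton_const x]
  exact (cat_singleton_injective x).eq_iff

namespace Mealy

variable {S : Type} (M : Mealy S)

lemma stateAt_cat_singleton_succ (q : S) (x : Bool) (w : ℕ → Bool) (n : ℕ) :
    M.stateAt q (cat [x] w) (n + 1) = M.stateAt (M.δ q x) w n := by
  induction n with
  | zero => rfl
  | succ n ih =>
    change M.δ (M.stateAt q (cat [x] w) (n + 1)) (cat [x] w (n + 1)) = _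
    rw [ih, cat_singleton_succ]
    rfl

lemma act_cat_singleton (q : S) (x : Bool) (w : ℕ → Bool) :
    M.act q (cat [x] w) = cat [M.τ q x] (M.act (M.δ q x) w) := by
  funext n
  cases n with
  | zero => rfl
  | succ n =>
    change M.τ (M.stateAt q (cat [x] w) (n + 1)) (cat [x] w (n + 1)) = _
    rw [stateAt_cat_singleton_succ, cat_singleton_succ, cat_singleton_succ]
    rfl

lemma inv_eq_self (h : ∀ q x, M.δ q (M.τ q x) = M.δ q x) : M.inv = M := by
  cases M
  simp only [inv, Mealy.mk.injEq, and_true]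
  funext q x
  exact h q x

lemma perm_mul_self (h : ∀ q b, M.τ q (M.τ q b) = b) (hinv : M.inv = M) (q : S) :
    M.perm h q * M.perm h q = 1 := by
  rw [mul_eq_one_iff_eq_inv]
  ext w n
  change M.act q w n = M.inv.act q w n
  rw [hinv]

end Mealy

section PowersOnSubtree

variable {f g : Equiv.Perm (ℕ → Bool)}

lemma pow_apply_cat_singleton {x : Bool} (h : ∀ w, f (cat [x] w) = cat [x] (g w))
    (n : ℕ) (w : ℕ → Bool) : (f ^ n) (cat [x] w) = cat [x] ((g ^ n) w) := by
  induction n with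
  | zero => rfl
  | succ n ih => rw [pow_succ', pow_succ', Equiv.Perm.mul_apply, ih, h, Equiv.Perm.mul_apply]

lemma pow_apply_const_eq_cat {x : Bool} (h : ∀ w, f (cat [x] w) = cat [x] (g w)) (n : ℕ) :
    (f ^ n) (fun _ => x) = cat [x] ((g ^ n) (fun _ => x)) := by
  rw [← pow_apply_cat_singleton h, cat_singleton_const]

lemma pow_apply_zero_of_odd (hf : ∀ w, f w 0 = !(w 0)) {n : ℕ} (hn : Odd n)
    (w : ℕ → Bool) : (f ^ n) w 0 = !(w 0) := by
  obtain ⟨k, rfl⟩ := hn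
  induction k generalizing w with
  | zero => simpa using hf w
  | succ k ih =>
    rw [show 2 * (k + 1) + 1 = 2 * k + 1 + 2 by ring, pow_add, Equiv.Perm.mul_apply, ih, sq,
      Equiv.Perm.mul_apply, hf, hf, Bool.not_not]

end PowersOnSubtree

lemma a_cat (x : Bool) (w : ℕ → Bool) : a (cat [x] w) = cat [!x] (b w) := by
  cases x <;> exact M.act_cat_singleton .a _ w

lemma b_cat (x : Bool) (w : ℕ → Bool) : b (cat [x] w) = cat [x] (c w) := by
  cases x <;> exact M.act_cat_singleton .b _ w

lemma c_cat_true (w : ℕ → Bool) : c (cat [true] w) = cat [true] (a w) :=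
  M.act_cat_singleton .c true w

lemma c_cat_false (w : ℕ → Bool) : c (cat [false] w) = cat [false] (b w) :=
  M.act_cat_singleton .c false w

lemma b_mul_b : b * b = 1 :=
  M.perm_mul_self M_inv (M.inv_eq_self (by decide)) .b

lemma bc_cat_true (w : ℕ → Bool) : (b * c) (cat [true] w) = cat [true] ((c * a) w) := by
  simp only [Equiv.Perm.mul_apply, c_cat_true, b_cat]

lemma ca_sq_cat_true (w : ℕ → Bool) :
    ((c * a) ^ 2) (cat [true] w) = cat [true] ((a * b) w) := by
  have hb : b (b w) = w := by rw [← Equiv.Perm.mul_apply, b_mul_b, Equiv.Perm.one_apply]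
  simp only [sq, Equiv.Perm.mul_apply, a_cat, c_cat_false, hb, Bool.not_true, Bool.not_false,
    c_cat_true]

lemma ab_sq_cat_true (w : ℕ → Bool) :
    ((a * b) ^ 2) (cat [true] w) = cat [true] (((b * c) ^ 2) w) := by
  simp only [sq, Equiv.Perm.mul_apply, b_cat, a_cat, Bool.not_true, Bool.not_false]

lemma ca_apply_zero (w : ℕ → Bool) : (c * a) w 0 = !(w 0) := rfl

lemma ab_apply_zero (w : ℕ → Bool) : (a * b) w 0 = !(w 0) := rfl

lemma ca_pow_ne_const_true {n : ℕ} (hn : 1 ≤ n) :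
    ((c * a) ^ n) (fun _ => true) ≠ fun _ => true := by
  induction n using Nat.strong_induction_on with
  | _ n ih =>
    intro hfix
    obtain ⟨k, rfl | rfl⟩ := Nat.even_or_odd' n
    · have hab : ((a * b) ^ k) (fun _ => true) = fun _ => true := by
        rwa [pow_mul, pow_apply_const_eq_cat ca_sq_cat_true, cat_singleton_eq_const_iff] at hfix
      obtain ⟨j, rfl | rfl⟩ := Nat.even_or_odd' k
      · have hca : ((c * a) ^ (2 * j)) (fun _ => true) = fun _ => true := by
          rwa [pow_mul, pow_apply_const_eq_cat ab_sq_cat_true, cat_singleton_eq_const_iff,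
            ← pow_mul, pow_apply_const_eq_cat bc_cat_true, cat_singleton_eq_const_iff] at hab
        exact ih (2 * j) (by omega) (by omega) hca
      · simpa [pow_apply_zero_of_odd ab_apply_zero (odd_two_mul_add_one j)] using
          congrFun hab 0
    · simpa [pow_apply_zero_of_odd ca_apply_zero (odd_two_mul_add_one k)] using congrFun hfix 0

/-- In the automaton group of automaton 887: `bc(1) = 1` and `(bc)|₁ = ca`, hence
`(bc)ⁿ(1^∞) = 1·(ca)ⁿ(1^∞)` for all `n ≥ 1`; since `(ca)ⁿ(1^∞) ≠ 1^∞` for `n ≥ 1`,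
the element `bc` has infinite order. -/
theorem automaton887_bc :
    (∀ w : ℕ → Bool, (b * c) (cat [true] w) = cat [true] ((c * a) w)) ∧
    (∀ n : ℕ, 1 ≤ n → ⇑((b * c) ^ n) (fun _ => true) = cat [true] (⇑((c * a) ^ n) (fun _ => true))) ∧
    (∀ n : ℕ, 1 ≤ n → ⇑((c * a) ^ n) (fun _ => true) ≠ (fun _ => true)) ∧
    (∀ n : ℕ, 1 ≤ n → (b * c) ^ n ≠ 1) := by
  refine ⟨bc_cat_true, fun n _ => pow_apply_const_eq_cat bc_cat_true n,
    fun n hn => ca_pow_ne_const_true hn, fun n hn hbc => ca_pow_ne_const_true hn ?_⟩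
  have hfix : ((b * c) ^ n) (fun _ => true) = fun _ => true := by rw [hbc]; rfl
  rwa [pow_apply_const_eq_cat bc_cat_true, cat_singleton_eq_const_iff] at hfix

end Stmt13
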